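/- In the 4-service two-player uniform-reward ISG defined below, the schedule where both players order their services (a, b, c, d) is a pure Nash equilibrium. -/

import Mathlib

open scoped Classical
noncomputable section

/-- The (1-based) time slot at which service `v` is deployed. -/
def slot {k q : ℕ} (σ : Fin k → Equiv.Perm (Fin q)) (v : Fin k × Fin q) : ℕ :=
  (σ v.1 v.2 : ℕ) + 1

/-- Activation time of `v`: latest deployment among `v` and its in-neighbors. -/
def act {k q : ℕ} (E : Fin k × Fin q → Fin k × Fin q → Prop)
    (σ : Fin k → Equiv.Perm (Fin q)) (v : Fin k × Fin q) : ℕ :=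
  (insert v (Finset.univ.filter fun w => E w v)).sup (slot σ)

/-- Player `i`'s utility under uniform rewards. -/
def util {k q : ℕ} (E : Fin k × Fin q → Fin k × Fin q → Prop)
    (σ : Fin k → Equiv.Perm (Fin q)) (i : Fin k) : ℕ :=
  ∑ j : Fin q, (q + 1 - act E σ (i, j))

/-- Utilitarian social welfare. -/
def welfare {k q : ℕ} (E : Fin k × Fin q → Fin k × Fin q → Prop)
    (σ : Fin k → Equiv.Perm (Fin q)) : ℕ :=
  ∑ i : Fin k, util E σ i

/-- Pure Nash equilibrium: no unilateral deviation improves a player's utility. -/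
def PNE {k q : ℕ} (E : Fin k × Fin q → Fin k × Fin q → Prop)
    (σ : Fin k → Equiv.Perm (Fin q)) : Prop :=
  ∀ (i : Fin k) (τ : Equiv.Perm (Fin q)),
    util E (Function.update σ i τ) i ≤ util E σ i

/-- Base dependency edges: (a₁,a₂), (b₁,b₂), (c₂,c₁), (d₂,d₁),
with services a,b,c,d of player `i` at indices 0,1,2,3. -/
def base12 : Fin 2 × Fin 4 → Fin 2 × Fin 4 → Prop := fun v w =>
  (v, w) ∈ ([((0, 0), (1, 0)), ((0, 1), (1, 1)), ((1, 2), (0, 2)), ((1, 3), (0, 3))] :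
      List ((Fin 2 × Fin 4) × (Fin 2 × Fin 4)))

/-- The dependency relation: transitive closure of the base edges. -/
def E12 : Fin 2 × Fin 4 → Fin 2 × Fin 4 → Prop := Relation.TransGen base12

/-!
Activation never precedes deployment, so under any schedule a player's utility is at most
`∑ j, (q - j) = q (q + 1) / 2`, the value obtained when each of his services is activated in
its own slot. In the schedule `(a, b, c, d)` for both players every dependency edge joins two
services in the same slot, so nothing waits and both players already attain this bound.
-/

section UniformRewards

variable {k q : ℕ} {E : Fin k × Fin q → Fin k × Fin q → Prop}

theorem slot_le_act (σ : Fin k → Equiv.Perm (Fin q)) (v : Fin k × Fin q) :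
    slot σ v ≤ act E σ v :=
  Finset.le_sup (Finset.mem_insert_self _ _)

theorem act_eq_slot {σ : Fin k → Equiv.Perm (Fin q)} {v : Fin k × Fin q}
    (h : ∀ w, E w v → slot σ w ≤ slot σ v) : act E σ v = slot σ v := by
  refine le_antisymm (Finset.sup_le fun w hw => ?_) (slot_le_act σ v)
  rcases Finset.mem_insert.mp hw with rfl | hw
  · exact le_rfl
  · exact h w (Finset.mem_filter.mp hw).2

theorem sum_sub_slot (σ : Fin k → Equiv.Perm (Fin q)) (i : Fin k) :
    ∑ j : Fin q, (q + 1 - slot σ (i, j)) = ∑ j : Fin q, (q - (j : ℕ)) := by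
  simp only [slot, Nat.add_sub_add_right]
  exact Equiv.sum_comp (σ i) fun j : Fin q => q - (j : ℕ)

theorem util_le (σ : Fin k → Equiv.Perm (Fin q)) (i : Fin k) :
    util E σ i ≤ ∑ j : Fin q, (q - (j : ℕ)) := by
  rw [← sum_sub_slot σ i]
  exact Finset.sum_le_sum fun j _ => Nat.sub_le_sub_left (slot_le_act σ (i, j)) _

theorem util_eq_of_forall_slot_le {σ : Fin k → Equiv.Perm (Fin q)} {i : Fin k}
    (h : ∀ j w, E w (i, j) → slot σ w ≤ slot σ (i, j)) :
    util E σ i = ∑ j : Fin q, (q - (j : ℕ)) := by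
  rw [← sum_sub_slot σ i]
  exact Finset.sum_congr rfl fun j _ => by rw [act_eq_slot (h j)]

theorem PNE_of_forall_slot_le {σ : Fin k → Equiv.Perm (Fin q)}
    (h : ∀ v w, E w v → slot σ w ≤ slot σ v) : PNE E σ := fun i τ => by
  rw [util_eq_of_forall_slot_le fun j => h (i, j)]
  exact util_le _ i

end UniformRewards

theorem base12.snd_eq {v w : Fin 2 × Fin 4} (h : base12 v w) : v.2 = w.2 := by
  simp only [base12, List.mem_cons, List.not_mem_nil, Prod.mk.injEq, or_false] at h
  rcases h with ⟨rfl, rfl⟩ | ⟨rfl, rfl⟩ | ⟨rfl, rfl⟩ | ⟨rfl, rfl⟩ <;> rfl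

theorem E12.snd_eq {v w : Fin 2 × Fin 4} (h : E12 v w) : v.2 = w.2 := by
  induction h with
  | single h => exact base12.snd_eq h
  | tail _ h ih => exact ih.trans (base12.snd_eq h)

/-- The schedule where both players order their services (a, b, c, d) is a PNE. -/
theorem stmt_12 : PNE E12 (fun _ => 1) :=
  PNE_of_forall_slot_le fun _ _ h => by simp only [slot, Equiv.Perm.one_apply, E12.snd_eq h, le_rfl]
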